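/- arXiv:1509.05263 — 2 statements merged into one kernel-verified Lean document; each statement's English description precedes it below -/
import Mathlib

section
/- Let a group G act on a compact metric space K by homeomorphisms, and suppose the action is Lyapunov stable. Let π be the induced representation of G on C(K). Then C(K) = C(K)_π + Ann(C(K)*_π̄). -/
/-!
By Lyapunov stability the orbit of `φ` under `π` is uniformly equicontinuous, hence totally
bounded in `C(K)` by Arzelà–Ascoli, so its closed convex hull `C` is a nonempty compact convex
set on which `G` acts by isometries. Kakutani's fixed point theorem gives a `π`-invariant
`φ₁ ∈ C`. A `π̄`-invariant functional is constant on the orbit, hence on `C`, so it vanishes at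
`φ - φ₁`.

Kakutani's theorem follows from the diameter argument: in a minimal invariant compact convex set
`M` of positive diameter, the barycentre of a finite net is at distance `< diam M` from all of
`M`, so the points of `M` within that distance of all of `M` form a smaller invariant compact
convex set.
-/

open Set Function Metric
open scoped BoundedContinuousFunction

theorem UniformContinuous.comp_uniformEquicontinuous {ι α β γ : Type*} [UniformSpace α]
    [UniformSpace β] [UniformSpace γ] {φ : α → γ} (hφ : UniformContinuous φ)
    {F : ι → β → α} (hF : UniformEquicontinuous F) :
    UniformEquicontinuous fun i => φ ∘ F i :=
  fun _ hU => hF _ (hφ hU)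

namespace ContinuousMap

variable {X Y β : Type*} [TopologicalSpace X] [CompactSpace X]

theorem totallyBounded_range_of_equicontinuous {ι : Type*} [NormedAddCommGroup β]
    [ProperSpace β] {F : ι → C(X, β)} (hF : Equicontinuous fun i => ⇑(F i)) {R : ℝ}
    (hR : ∀ i, ‖F i‖ ≤ R) : TotallyBounded (range F) := by
  let e := isometryEquivBoundedOfCompact X β
  have hcoe : (fun f : range (e ∘ F) => ⇑(f : X →ᵇ β)) =
      (fun i => ⇑(F i)) ∘ fun f => f.2.choose := by
    funext f
    rw [← f.2.choose_spec]
    rfl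
  have hcompact : IsCompact (closure (range (e ∘ F))) :=
    BoundedContinuousFunction.arzela_ascoli (closedBall 0 R) (isCompact_closedBall 0 R) _
      (by
        rintro _ x ⟨i, rfl⟩
        exact mem_closedBall_zero_iff.2 (((F i).norm_coe_le_norm x).trans (hR i)))
      (hcoe ▸ hF.comp _)
  have := (hcompact.totallyBounded.subset subset_closure).image e.symm.isometry.uniformContinuous
  simpa [← range_comp, comp_def] using this

theorem dist_comp_eq_of_surjective [TopologicalSpace Y] [CompactSpace Y] [MetricSpace β]
    {h : C(X, Y)} (hh : Surjective h) (ψ χ : C(Y, β)) :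
    dist (ψ.comp h) (χ.comp h) = dist ψ χ := by
  refine le_antisymm ((dist_le dist_nonneg).2 fun x => dist_apply_le_dist (h x))
    ((dist_le dist_nonneg).2 fun y => ?_)
  obtain ⟨x, rfl⟩ := hh y
  exact dist_apply_le_dist (f := ψ.comp h) (g := χ.comp h) x

end ContinuousMap

section Kakutani

variable {E G : Type*} [NormedAddCommGroup E] [NormedSpace ℝ E] [Group G]

theorem Convex.exists_mem_subset_closedBall_lt_diam {M : Set E} (hconv : Convex ℝ M)
    (hM : IsCompact M) (hdiam : 0 < diam M) :
    ∃ z ∈ M, ∃ r < diam M, M ⊆ closedBall z r := by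
  obtain ⟨F, hFM, hcover⟩ :=
    hM.elim_nhds_subcover (ball · (diam M)) fun x _ => ball_mem_nhds x hdiam
  have hF : F.Nonempty := by
    obtain ⟨y, hy⟩ := M.eq_empty_or_nonempty.resolve_left (by rintro rfl; simp at hdiam)
    obtain ⟨x, hx, -⟩ := mem_iUnion₂.1 (hcover hy)
    exact ⟨x, hx⟩
  set n : ℝ := (F.card : ℝ)
  have hn : 0 < n := by simpa [n] using hF.card_pos
  set z := ∑ x ∈ F, n⁻¹ • x
  have hz : z ∈ M := hconv.sum_mem (fun _ _ => by positivity) (by simp [n, hn.ne']) hFM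
  have hzy : ∀ y, z - y = n⁻¹ • ∑ x ∈ F, (x - y) := fun y => by
    rw [Finset.sum_sub_distrib, Finset.sum_const, smul_sub, ← Nat.cast_smul_eq_nsmul ℝ, smul_smul,
      inv_mul_cancel₀ hn.ne', one_smul, Finset.smul_sum]
  have hlt : ∀ y ∈ M, dist z y < diam M := by
    intro y hy
    obtain ⟨x₀, hx₀, hx₀y⟩ := mem_iUnion₂.1 (hcover hy)
    calc dist z y ≤ n⁻¹ * ∑ x ∈ F, dist x y := by
          simp_rw [dist_eq_norm, hzy, norm_smul, Real.norm_of_nonneg (inv_nonneg.2 hn.le)]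
          gcongr
          exact norm_sum_le _ _
      _ < n⁻¹ * ∑ x ∈ F, diam M := by
          refine mul_lt_mul_of_pos_left (Finset.sum_lt_sum (fun x hx => ?_) ⟨x₀, hx₀, ?_⟩)
            (inv_pos.2 hn)
          · exact dist_le_diam_of_mem hM.isBounded (hFM x hx) hy
          · exact mem_ball'.1 hx₀y
      _ = diam M := by simp [n, hn.ne']
  obtain ⟨y₀, hy₀, hmax⟩ :=
    hM.exists_isMaxOn ⟨z, hz⟩ (continuous_const.dist continuous_id).continuousOn
  exact ⟨z, hz, dist z y₀, hlt y₀ hy₀, fun y hy => mem_closedBall_comm.1 (hmax hy)⟩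

structure IsInvariantCompactConvex (ρ : G →* (E ≃ᵢ E)) (M : Set E) : Prop where
  nonempty : M.Nonempty
  isCompact : IsCompact M
  convex : Convex ℝ M
  mapsTo : ∀ g, MapsTo (ρ g) M M

variable {ρ : G →* (E ≃ᵢ E)} {C : Set E}

theorem isInvariantCompactConvex_closedConvexHull_orbit [CompleteSpace E] {x : E}
    (hx : TotallyBounded (range fun g => ρ g x)) :
    IsInvariantCompactConvex ρ (closedConvexHull ℝ (range fun g => ρ g x)) where
  nonempty := ⟨x, subset_closedConvexHull ⟨1, by simp⟩⟩
  isCompact := by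
    rw [closedConvexHull_eq_closure_convexHull]
    exact (totallyBounded_convexHull.2 hx).closure.isCompact_of_isClosed isClosed_closure
  convex := convex_closedConvexHull
  mapsTo g := by
    refine closedConvexHull_min ?_ ?_ (isClosed_closedConvexHull.preimage (ρ g).continuous)
    · rintro _ ⟨h, rfl⟩
      change ρ g (ρ h x) ∈ closedConvexHull ℝ _
      rw [← IsometryEquiv.mul_apply, ← map_mul]
      exact subset_closedConvexHull ⟨g * h, rfl⟩
    · -- surjective isometries are affine by Mazur–Ulam
      rw [← (ρ g).coeFn_toRealAffineIsometryEquiv]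
      exact convex_closedConvexHull.affine_preimage (ρ g).toRealAffineIsometryEquiv.toAffineMap

theorem IsInvariantCompactConvex.exists_minimal (hC : IsInvariantCompactConvex ρ C) :
    ∃ M ⊆ C, Minimal (IsInvariantCompactConvex ρ) M := by
  refine zorn_superset_nonempty {M | IsInvariantCompactConvex ρ M}
    (fun c hc hchain ⟨M₀, hM₀⟩ => ?_) C hC
  have : Nonempty c := ⟨⟨M₀, hM₀⟩⟩
  have hclosed : ∀ M ∈ c, IsClosed M := fun M hM => (hc hM).isCompact.isClosed
  refine ⟨⋂₀ c, ⟨?_, ?_, ?_, ?_⟩, fun M hM => sInter_subset_of_mem hM⟩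
  · exact IsCompact.nonempty_sInter_of_directed_nonempty_isCompact_isClosed
      (IsChain.directedOn (r := fun s t : Set E => s ⊇ t) hchain.symm)
      (fun M hM => (hc hM).nonempty) (fun M hM => (hc hM).isCompact) hclosed
  · exact (hc hM₀).isCompact.of_isClosed_subset (isClosed_sInter hclosed)
      (sInter_subset_of_mem hM₀)
  · exact convex_sInter fun M hM => (hc hM).convex
  · exact fun g p hp => mem_sInter.2 fun M hM => (hc hM).mapsTo g (hp M hM)

theorem Minimal.subsingleton_of_isInvariantCompactConvex {M : Set E}
    (hM : Minimal (IsInvariantCompactConvex ρ) M) : M.Subsingleton := by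
  obtain ⟨-, hcompact, hconv, hmaps⟩ := hM.prop
  by_contra hsub
  obtain ⟨z, hz, r, hr, hMr⟩ := hconv.exists_mem_subset_closedBall_lt_diam hcompact
    (diam_pos (not_subsingleton_iff.1 hsub) hcompact.isBounded)
  set M' := M ∩ ⋂ y ∈ M, closedBall y r
  have hM' : IsInvariantCompactConvex ρ M' := by
    refine ⟨⟨z, hz, mem_iInter₂.2 fun y hy => mem_closedBall_comm.1 (hMr hy)⟩, ?_, ?_, ?_⟩
    · exact hcompact.inter_right (isClosed_biInter fun y _ => isClosed_closedBall)
    · exact hconv.inter (convex_iInter₂ fun y _ => convex_closedBall y r)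
    · rintro g p ⟨hp, hpr⟩
      refine ⟨hmaps g hp, mem_iInter₂.2 fun y hy => ?_⟩
      have hdist : dist (ρ g p) y = dist p (ρ g⁻¹ y) := by
        rw [← (ρ g).dist_eq p, ← IsometryEquiv.mul_apply, ← map_mul, mul_inv_cancel, map_one]
        rfl
      rw [mem_closedBall, hdist]
      exact mem_iInter₂.1 hpr _ (hmaps g⁻¹ hy)
  have hMM' : M ⊆ M' := hM.le_of_le hM' inter_subset_left
  refine hr.not_ge (diam_le_of_forall_dist_le (dist_nonneg.trans (mem_closedBall.1 (hMr hz)))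
    fun p hp q hq => ?_)
  exact mem_closedBall.1 (mem_iInter₂.1 (hMM' hp).2 q hq)

theorem IsInvariantCompactConvex.exists_isFixedPt (hC : IsInvariantCompactConvex ρ C) :
    ∃ x ∈ C, ∀ g, IsFixedPt (ρ g) x := by
  obtain ⟨M, hMC, hM⟩ := hC.exists_minimal
  obtain ⟨x, hx⟩ := hM.prop.nonempty
  exact ⟨x, hMC hx,
    fun g => hM.subsingleton_of_isInvariantCompactConvex (hM.prop.mapsTo g hx) hx⟩

end Kakutani

section InducedRep

variable (G K : Type*) [Group G] [TopologicalSpace K] [CompactSpace K] [MulAction G K]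
  [ContinuousConstSMul G K]

noncomputable def inducedRep : G →* (C(K, ℝ) ≃ᵢ C(K, ℝ)) where
  toFun g :=
    { toFun := fun ψ => ψ.comp ⟨fun x : K => g⁻¹ • x, continuous_const_smul _⟩
      invFun := fun ψ => ψ.comp ⟨fun x : K => g • x, continuous_const_smul _⟩
      left_inv := fun ψ => by ext; simp
      right_inv := fun ψ => by ext; simp
      isometry_toFun := Isometry.of_dist_eq
        (ContinuousMap.dist_comp_eq_of_surjective (MulAction.surjective g⁻¹)) }
  map_one' := by ext; simp
  map_mul' g h := by ext; simp [mul_smul]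

variable {G K}

theorem inducedRep_apply (g : G) (ψ : C(K, ℝ)) (x : K) : inducedRep G K g ψ x = ψ (g⁻¹ • x) :=
  rfl

end InducedRep

theorem totallyBounded_range_inducedRep {G K : Type*} [Group G] [UniformSpace K]
    [CompactSpace K] [MulAction G K] [ContinuousConstSMul G K]
    (hK : UniformEquicontinuous fun g : G => (g • · : K → K)) (φ : C(K, ℝ)) :
    TotallyBounded (range fun g => inducedRep G K g φ) :=
  ContinuousMap.totallyBounded_range_of_equicontinuous
    (((CompactSpace.uniformContinuous_of_continuous φ.continuous).comp_uniformEquicontinuous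
      hK).equicontinuous.comp (·⁻¹))
    fun _ => (ContinuousMap.norm_le _ (norm_nonneg φ)).2 fun _ => φ.norm_coe_le_norm _

/-- Let a group `G` act by homeomorphisms on a compact metric space `K`, with the
action Lyapunov stable, and let `π` be the induced representation on `C(K)`. Then
`C(K) = C(K)_π + Ann(C(K)*_π̄)`: every `φ ∈ C(K)` is a sum of an invariant function
and a function annihilated by every `π̄`-invariant functional. -/
theorem lyapunov_stable_sum_decomposition
    {G K : Type*} [Group G] [MetricSpace K] [CompactSpace K] [MulAction G K]
    [ContinuousConstSMul G K]
    (hLS : ∀ ε > (0 : ℝ), ∃ δ > (0 : ℝ),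
      ∀ (g : G) (x y : K), dist x y < δ → dist (g • x) (g • y) < ε) :
    ∀ φ : C(K, ℝ), ∃ φ₁ φ₂ : C(K, ℝ),
      (∀ (g : G) (x : K), φ₁ (g • x) = φ₁ x) ∧
      (∀ f : StrongDual ℝ C(K, ℝ),
        (∀ (g : G) (ψ : C(K, ℝ)),
          f (ψ.comp ⟨fun x : K => g⁻¹ • x, continuous_const_smul _⟩) = f ψ) →
        f φ₂ = 0) ∧
      φ = φ₁ + φ₂ := by
  intro φ
  have hK : UniformEquicontinuous fun g : G => (g • · : K → K) :=
    Metric.uniformEquicontinuous_iff.2 fun ε hε =>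
      (hLS ε hε).imp fun _ ⟨hδ, h⟩ => ⟨hδ, fun x y hxy g => h g x y hxy⟩
  set C := closedConvexHull ℝ (range fun g => inducedRep G K g φ)
  obtain ⟨φ₁, hφ₁C, hφ₁⟩ := (isInvariantCompactConvex_closedConvexHull_orbit
    (totallyBounded_range_inducedRep hK φ)).exists_isFixedPt
  refine ⟨φ₁, φ - φ₁, fun g x => ?_, fun f hf => ?_, by abel⟩
  · have := DFunLike.congr_fun (hφ₁ g⁻¹) x
    rwa [inducedRep_apply, inv_inv] at this
  have hconst : C ⊆ {ψ | f ψ = f φ} := by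
    refine closedConvexHull_min ?_ ?_ (isClosed_eq f.continuous continuous_const)
    · rintro _ ⟨g, rfl⟩
      exact hf g φ
    · exact convex_hyperplane f.isLinear (f φ)
  rw [map_sub, hconst hφ₁C, sub_self]
end

section
/- Let a group G act on a compact metric space K by homeomorphisms, and suppose the action is Lyapunov stable. Let π be the induced representation of G on C(K). Then C(K) decomposes as the direct sum of closed subspaces C(K) = C(K)_π ⊕ Ann(C(K)*_π̄), and the corresponding projection P of C(K) onto C(K)_π has norm 1 and satisfies P(φψ) = φ·P(ψ) for all φ ∈ C(K)_π and ψ ∈ C(K) (i.e., P is a conditional expectation onto the subalgebra C(K)_π). -/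
/-!
Lyapunov stability says that the maps `x ↦ g • x` form an equicontinuous family, and so do their
inverses. By Arzelà–Ascoli the closure `E` of the image of `G` in the homeomorphism group of `K`
(with the Arens topology) is therefore a compact group acting continuously on `K`. Averaging over
its Haar probability measure, `P φ x = ∫ e, φ (e • x)`, gives the projection: bi-invariance of the
Haar measure makes `P φ` invariant and `P` insensitive to translating its argument, invariant
functions are fixed, and every invariant functional `f` satisfies `f ∘ P = f`, which identifies
`ker P` with the preannihilator of the invariant functionals. By density of `G` in `E`,
`G`-invariance and `E`-invariance coincide, both for functions and for functionals.
-/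

open MeasureTheory Topology

theorem ContinuousMap.isCompact_closure_range_of_equicontinuous {ι X Y : Type*}
    [TopologicalSpace X] [CompactSpace X] [MetricSpace Y] [CompactSpace Y]
    {F : ι → C(X, Y)} (hF : Equicontinuous fun i => ⇑(F i)) :
    IsCompact (closure (Set.range F)) := by
  let e := (ContinuousMap.isometryEquivBoundedOfCompact X Y).toHomeomorph
  have h : IsCompact (closure (Set.range (e ∘ F))) :=
    BoundedContinuousFunction.arzela_ascoli Set.univ isCompact_univ _
      (fun _ _ _ => Set.mem_univ _) fun x U hU =>
        (hF x U hU).mono fun _ hy => by rintro ⟨_, i, rfl⟩; exact hy i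
  rwa [Set.range_comp, ← e.image_closure, e.isCompact_image] at h

namespace Homeomorph

section TopologicalSpace

variable {X : Type*} [TopologicalSpace X]

instance applyMulAction : MulAction (X ≃ₜ X) X where
  smul e x := e x
  one_smul _ := rfl
  mul_smul _ _ _ := rfl

def toContinuousMapPair (e : X ≃ₜ X) : C(X, X) × C(X, X) := (e, e.symm)

-- The Arens topology.
instance : TopologicalSpace (X ≃ₜ X) :=
  TopologicalSpace.induced toContinuousMapPair inferInstance

lemma isEmbedding_toContinuousMapPair : IsEmbedding (toContinuousMapPair (X := X)) :=
  ⟨⟨rfl⟩, fun _ _ h => Homeomorph.ext fun x => ContinuousMap.congr_fun (congrArg Prod.fst h) x⟩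

instance [T2Space X] : T2Space (X ≃ₜ X) :=
  isEmbedding_toContinuousMapPair.t2Space

lemma continuous_toContinuousMap : Continuous fun e : X ≃ₜ X => (e : C(X, X)) :=
  continuous_fst.comp isEmbedding_toContinuousMapPair.continuous

lemma range_toContinuousMapPair :
    Set.range (toContinuousMapPair (X := X)) =
      {p | p.1.comp p.2 = ContinuousMap.id X ∧ p.2.comp p.1 = ContinuousMap.id X} := by
  ext ⟨f, g⟩
  constructor
  · rintro ⟨e, he⟩
    simp only [toContinuousMapPair, Prod.mk.injEq] at he
    obtain ⟨rfl, rfl⟩ := he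
    exact ⟨by ext; simp, by ext; simp⟩
  · rintro ⟨hfg, hgf⟩
    exact ⟨⟨⟨f, g, ContinuousMap.congr_fun hgf, ContinuousMap.congr_fun hfg⟩,
      f.continuous, g.continuous⟩, rfl⟩

variable [LocallyCompactSpace X]

instance : IsTopologicalGroup (X ≃ₜ X) where
  continuous_mul := by
    have h : Continuous (toContinuousMapPair (X := X)) :=
      isEmbedding_toContinuousMapPair.continuous
    refine isEmbedding_toContinuousMapPair.isInducing.continuous_iff.2 ?_
    exact (ContinuousMap.continuous_comp'.comp
        ((continuous_fst.comp (h.comp continuous_snd)).prodMk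
          (continuous_fst.comp (h.comp continuous_fst)))).prodMk
      (ContinuousMap.continuous_comp'.comp
        ((continuous_snd.comp (h.comp continuous_fst)).prodMk
          (continuous_snd.comp (h.comp continuous_snd))))
  continuous_inv :=
    isEmbedding_toContinuousMapPair.isInducing.continuous_iff.2 <|
      continuous_swap.comp isEmbedding_toContinuousMapPair.continuous

instance : ContinuousSMul (X ≃ₜ X) X :=
  ⟨(continuous_eval (F := C(X, X))).comp
    ((continuous_toContinuousMap.comp continuous_fst).prodMk continuous_snd)⟩

lemma isClosedEmbedding_toContinuousMapPair [T2Space X] :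
    IsClosedEmbedding (toContinuousMapPair (X := X)) where
  toIsEmbedding := isEmbedding_toContinuousMapPair
  isClosed_range := by
    rw [range_toContinuousMapPair]
    exact (isClosed_eq (ContinuousMap.continuous_comp'.comp continuous_swap) continuous_const).inter
      (isClosed_eq ContinuousMap.continuous_comp' continuous_const)

end TopologicalSpace

theorem isCompact_closure_range_of_equicontinuous {ι X : Type*} [MetricSpace X] [CompactSpace X]
    {F : ι → X ≃ₜ X} (hF : Equicontinuous fun i => ⇑(F i))
    (hF_symm : Equicontinuous fun i => ⇑(F i).symm) : IsCompact (closure (Set.range F)) := by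
  have hpair : IsCompact (toContinuousMapPair ⁻¹'
      (closure (Set.range fun i => (F i : C(X, X))) ×ˢ
        closure (Set.range fun i => ((F i).symm : C(X, X))))) :=
    isClosedEmbedding_toContinuousMapPair.isCompact_preimage
      ((ContinuousMap.isCompact_closure_range_of_equicontinuous hF).prod
        (ContinuousMap.isCompact_closure_range_of_equicontinuous hF_symm))
  refine hpair.of_isClosed_subset isClosed_closure (closure_minimal ?_ hpair.isClosed)
  rintro _ ⟨i, rfl⟩
  exact ⟨subset_closure ⟨i, rfl⟩, subset_closure ⟨i, rfl⟩⟩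

end Homeomorph

namespace MulAction

variable (G X : Type*) [Group G] [TopologicalSpace X] [MulAction G X] [ContinuousConstSMul G X]

def toHomeomorphHom : G →* (X ≃ₜ X) where
  toFun := Homeomorph.smul
  map_one' := by ext; simp
  map_mul' _ _ := by ext; simp [mul_smul]

variable [LocallyCompactSpace X]

def envelopingGroup : Subgroup (X ≃ₜ X) := (toHomeomorphHom G X).range.topologicalClosure

def toEnvelopingGroup (g : G) : envelopingGroup G X :=
  ⟨toHomeomorphHom G X g, Subgroup.le_topologicalClosure _ ⟨g, rfl⟩⟩

lemma toEnvelopingGroup_smul (g : G) (x : X) : toEnvelopingGroup G X g • x = g • x := rfl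

lemma denseRange_toEnvelopingGroup : DenseRange (toEnvelopingGroup G X) := by
  rw [DenseRange, Subtype.dense_iff, ← Set.range_comp]
  exact subset_rfl

end MulAction

theorem MulAction.isCompact_envelopingGroup {G X : Type*} [Group G] [MetricSpace X]
    [CompactSpace X] [MulAction G X] [ContinuousConstSMul G X]
    (h : Equicontinuous fun (g : G) (x : X) => g • x) :
    IsCompact (envelopingGroup G X : Set (X ≃ₜ X)) :=
  Homeomorph.isCompact_closure_range_of_equicontinuous (F := Homeomorph.smul) h (h.comp Inv.inv)

theorem MeasureTheory.Measure.exists_isProbabilityMeasure_isMulLeftInvariant_isMulRightInvariant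
    (H : Type*) [Group H] [TopologicalSpace H] [IsTopologicalGroup H] [CompactSpace H]
    [MeasurableSpace H] [BorelSpace H] :
    ∃ μ : Measure H, IsProbabilityMeasure μ ∧ μ.IsMulLeftInvariant ∧ μ.IsMulRightInvariant := by
  let μ := haarMeasure (⊤ : TopologicalSpace.PositiveCompacts H)
  have hμ : IsProbabilityMeasure μ :=
    ⟨by rw [← TopologicalSpace.PositiveCompacts.coe_top]; exact haarMeasure_self⟩
  refine ⟨μ, hμ, inferInstance, ⟨fun g => ?_⟩⟩
  have : IsProbabilityMeasure (μ.map (· * g)) :=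
    isProbabilityMeasure_map (continuous_mul_const g).measurable.aemeasurable
  exact isHaarMeasure_eq_of_isProbabilityMeasure _ _

section OrbitMap

variable {H K : Type*} [Group H] [TopologicalSpace H] [TopologicalSpace K]
  [MulAction H K] [ContinuousSMul H K]

def orbitMap (φ : C(K, ℝ)) : C(H, C(K, ℝ)) :=
  (φ.comp ⟨fun p : H × K => p.1 • p.2, continuous_smul⟩).curry

@[simp] lemma orbitMap_apply (φ : C(K, ℝ)) (h : H) (x : K) : orbitMap φ h x = φ (h • x) := rfl

lemma norm_orbitMap_le [CompactSpace K] (φ : C(K, ℝ)) (h : H) : ‖orbitMap φ h‖ ≤ ‖φ‖ :=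
  (ContinuousMap.norm_le _ (norm_nonneg φ)).2 fun x => φ.norm_coe_le_norm (h • x)

lemma orbitMap_eq_const {φ : C(K, ℝ)} (hφ : ∀ (h : H) (x : K), φ (h • x) = φ x) :
    orbitMap φ = ContinuousMap.const H φ := by
  ext h x
  exact hφ h x

end OrbitMap

section Average

variable {H K : Type*} [Group H] [TopologicalSpace H] [CompactSpace H]
  [MeasurableSpace H] [BorelSpace H] [TopologicalSpace K] [CompactSpace K]
  [MulAction H K] [ContinuousSMul H K] (μ : Measure H) [IsProbabilityMeasure μ]

lemma integrable_orbitMap (φ : C(K, ℝ)) : Integrable (orbitMap φ) μ :=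
  (orbitMap φ).continuous.integrable_of_hasCompactSupport (HasCompactSupport.of_compactSpace _)

noncomputable def averageCLM : C(K, ℝ) →L[ℝ] C(K, ℝ) :=
  LinearMap.mkContinuous
    { toFun := fun φ => ∫ h, orbitMap φ h ∂μ
      map_add' := fun φ ψ => integral_add (integrable_orbitMap μ φ) (integrable_orbitMap μ ψ)
      map_smul' := fun c φ => integral_smul c (orbitMap φ) } 1 fun φ => by
    rw [one_mul]
    exact (norm_integral_le_of_norm_le_const (.of_forall (norm_orbitMap_le φ))).trans (by simp)

lemma averageCLM_apply (φ : C(K, ℝ)) : averageCLM μ φ = ∫ h, orbitMap φ h ∂μ := rfl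

lemma averageCLM_apply_apply (φ : C(K, ℝ)) (x : K) : averageCLM μ φ x = ∫ h, φ (h • x) ∂μ :=
  ContinuousMap.integral_apply (integrable_orbitMap μ φ) x

lemma averageCLM_of_forall_smul_eq {φ : C(K, ℝ)} (hφ : ∀ (h : H) (x : K), φ (h • x) = φ x) :
    averageCLM μ φ = φ := by
  simp [averageCLM_apply, orbitMap_eq_const hφ]

lemma norm_averageCLM [Nonempty K] : ‖averageCLM (K := K) μ‖ = 1 := by
  refine le_antisymm (LinearMap.mkContinuous_norm_le _ zero_le_one _) ?_
  simpa [averageCLM_of_forall_smul_eq μ (φ := 1) fun _ _ => rfl] using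
    (averageCLM (K := K) μ).le_opNorm 1

lemma averageCLM_mul_of_forall_smul_eq {φ : C(K, ℝ)} (hφ : ∀ (h : H) (x : K), φ (h • x) = φ x)
    (ψ : C(K, ℝ)) : averageCLM μ (φ * ψ) = φ * averageCLM μ ψ := by
  ext x
  simp only [averageCLM_apply_apply, ContinuousMap.mul_apply, hφ, integral_const_mul]

lemma map_averageCLM_of_forall_map_orbitMap_eq {f : StrongDual ℝ C(K, ℝ)}
    (hf : ∀ (h : H) (ψ : C(K, ℝ)), f (orbitMap ψ h) = f ψ) (φ : C(K, ℝ)) :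
    f (averageCLM μ φ) = f φ := by
  rw [averageCLM_apply, ← f.integral_comp_comm (integrable_orbitMap μ φ)]
  simp [hf]

variable [IsTopologicalGroup H]

lemma averageCLM_orbitMap [μ.IsMulLeftInvariant] (h₀ : H) (ψ : C(K, ℝ)) :
    averageCLM μ (orbitMap ψ h₀) = averageCLM μ ψ := by
  ext x
  simp only [averageCLM_apply_apply, orbitMap_apply, ← mul_smul]
  exact integral_mul_left_eq_self (fun h => ψ (h • x)) h₀

lemma averageCLM_eq_zero_iff [μ.IsMulLeftInvariant] (φ : C(K, ℝ)) :
    averageCLM μ φ = 0 ↔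
      ∀ f : StrongDual ℝ C(K, ℝ), (∀ (h : H) (ψ : C(K, ℝ)), f (orbitMap ψ h) = f ψ) →
        f φ = 0 := by
  refine ⟨fun hφ f hf => ?_, fun hφ => ?_⟩
  · rw [← map_averageCLM_of_forall_map_orbitMap_eq μ hf, hφ, map_zero]
  · ext x
    exact hφ ((ContinuousMap.evalCLM ℝ x).comp (averageCLM μ)) fun h ψ => by
      simp [averageCLM_orbitMap]

lemma averageCLM_apply_smul [μ.IsMulRightInvariant] (φ : C(K, ℝ)) (h₀ : H) (x : K) :
    averageCLM μ φ (h₀ • x) = averageCLM μ φ x := by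
  simp only [averageCLM_apply_apply, ← mul_smul]
  exact integral_mul_right_eq_self (fun h => φ (h • x)) h₀

end Average

section DenseRange

variable {G H K : Type*} [Group G] [Group H] [TopologicalSpace H] [TopologicalSpace K]
  [MulAction G K] [MulAction H K] [ContinuousSMul H K] {ρ : G → H}

lemma forall_smul_eq_iff_of_denseRange (hρ : DenseRange ρ)
    (hρK : ∀ (g : G) (x : K), ρ g • x = g • x) (φ : C(K, ℝ)) :
    (∀ (h : H) (x : K), φ (h • x) = φ x) ↔ ∀ (g : G) (x : K), φ (g • x) = φ x := by
  refine ⟨fun hφ g x => hρK g x ▸ hφ (ρ g) x, fun hφ h x => ?_⟩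
  exact hρ.induction_on (p := fun h => φ (h • x) = φ x) h
    (isClosed_eq (φ.continuous.comp (continuous_id.smul continuous_const)) continuous_const)
    fun g => (hρK g x).symm ▸ hφ g x

lemma forall_map_orbitMap_eq_iff_of_denseRange [ContinuousConstSMul G K] (hρ : DenseRange ρ)
    (hρK : ∀ (g : G) (x : K), ρ g • x = g • x) (f : StrongDual ℝ C(K, ℝ)) :
    (∀ (h : H) (ψ : C(K, ℝ)), f (orbitMap ψ h) = f ψ) ↔
      ∀ (g : G) (ψ : C(K, ℝ)),
        f (ψ.comp ⟨fun x : K => g⁻¹ • x, continuous_const_smul _⟩) = f ψ := by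
  have horbit (g : G) (ψ : C(K, ℝ)) :
      orbitMap ψ (ρ g) = ψ.comp ⟨fun x : K => g • x, continuous_const_smul _⟩ := by
    ext x
    simp [hρK]
  refine ⟨fun hf g ψ => ?_, fun hf h ψ => ?_⟩
  · rw [← horbit]
    exact hf _ ψ
  · refine hρ.induction_on (p := fun h => f (orbitMap ψ h) = f ψ) h
      (isClosed_eq (f.continuous.comp (orbitMap ψ).continuous) continuous_const) fun g => ?_
    simpa [horbit] using hf g⁻¹ ψ

end DenseRange

/-- Let a group `G` act by homeomorphisms on a (nonempty) compact metric space `K`,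
with the action Lyapunov stable, and let `π` be the induced representation on `C(K)`.
Then `C(K) = C(K)_π ⊕ Ann(C(K)*_π̄)`: there is a bounded linear projection `P` of
`C(K)` onto the subalgebra `C(K)_π` of invariant functions whose kernel is the
preannihilator of the `π̄`-invariant functionals; moreover `‖P‖ = 1` and
`P (φ * ψ) = φ * P ψ` for every invariant `φ` (i.e. `P` is a conditional
expectation onto `C(K)_π`). -/
theorem lyapunov_stable_conditional_expectation
    {G K : Type*} [Group G] [MetricSpace K] [CompactSpace K] [Nonempty K] [MulAction G K]
    [ContinuousConstSMul G K]
    (hLS : ∀ ε > (0 : ℝ), ∃ δ > (0 : ℝ),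
      ∀ (g : G) (x y : K), dist x y < δ → dist (g • x) (g • y) < ε) :
    ∃ P : C(K, ℝ) →L[ℝ] C(K, ℝ),
      (∀ (φ : C(K, ℝ)) (g : G) (x : K), (P φ) (g • x) = (P φ) x) ∧
      (∀ φ : C(K, ℝ), (∀ (g : G) (x : K), φ (g • x) = φ x) → P φ = φ) ∧
      (∀ φ : C(K, ℝ), P φ = 0 ↔
        ∀ f : StrongDual ℝ C(K, ℝ),
          (∀ (g : G) (ψ : C(K, ℝ)),
            f (ψ.comp ⟨fun x : K => g⁻¹ • x, continuous_const_smul _⟩) = f ψ) →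
          f φ = 0) ∧
      ‖P‖ = 1 ∧
      (∀ φ ψ : C(K, ℝ), (∀ (g : G) (x : K), φ (g • x) = φ x) → P (φ * ψ) = φ * P ψ) := by
  let E := MulAction.envelopingGroup G K
  have hequi : UniformEquicontinuous fun (g : G) (x : K) => g • x :=
    Metric.uniformEquicontinuous_iff.2 fun ε hε =>
      (hLS ε hε).imp fun _ ⟨hδ, hg⟩ => ⟨hδ, fun x y hxy g => hg g x y hxy⟩
  have : CompactSpace E :=
    isCompact_iff_compactSpace.1 (MulAction.isCompact_envelopingGroup hequi.equicontinuous)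
  let _ : MeasurableSpace E := borel E
  have : BorelSpace E := ⟨rfl⟩
  obtain ⟨μ, _, _, _⟩ :=
    Measure.exists_isProbabilityMeasure_isMulLeftInvariant_isMulRightInvariant E
  have hdense := MulAction.denseRange_toEnvelopingGroup G K
  have hinv := forall_smul_eq_iff_of_denseRange hdense (MulAction.toEnvelopingGroup_smul G K)
  have hinv_dual :=
    forall_map_orbitMap_eq_iff_of_denseRange hdense (MulAction.toEnvelopingGroup_smul G K)
  refine ⟨averageCLM μ,
    fun φ g x => averageCLM_apply_smul μ φ (MulAction.toEnvelopingGroup G K g) x,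
    fun φ hφ => averageCLM_of_forall_smul_eq μ ((hinv φ).2 hφ), fun φ => ?_, norm_averageCLM μ,
    fun φ ψ hφ => averageCLM_mul_of_forall_smul_eq μ ((hinv φ).2 hφ) ψ⟩
  rw [averageCLM_eq_zero_iff]
  exact forall_congr' fun f => imp_congr_left (hinv_dual f)
end
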